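/- In the category ⟨four-block⟩ of all noncrossing partitions with blocks of even size (corresponding to H_N^+), two projective partitions p and q are equivalent if and only if w(p) = w(q), where w(p) is the word over ℤ/2 obtained by assigning to each through-block of p (read left to right) the value 0 if its size is divisible by 4 and 1 otherwise. -/

import Mathlib

/-- A two-row partition with `k` upper and `l` lower points, encoded as the
equivalence relation whose classes are the blocks. -/
abbrev PP (k l : ℕ) := Setoid (Fin k ⊕ Fin l)

/-- The involution `p*` (turning `p` upside down). -/
def swapP {k l : ℕ} (p : PP k l) : PP l k := Setoid.comap Sum.swap p

/-- Disjoint union of two setoids. -/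
def sumSetoid {α β : Type*} (s : Setoid α) (t : Setoid β) : Setoid (α ⊕ β) where
  r := Sum.LiftRel s.r t.r
  iseqv := by
    refine ⟨fun x => ?_, fun {x y} h => ?_, fun {x y z} h1 h2 => ?_⟩
    · cases x with
      | inl a => exact Sum.LiftRel.inl (s.iseqv.refl a)
      | inr b => exact Sum.LiftRel.inr (t.iseqv.refl b)
    · cases h with
      | inl h => exact Sum.LiftRel.inl (s.iseqv.symm h)
      | inr h => exact Sum.LiftRel.inr (t.iseqv.symm h)
    · cases h1 with
      | inl h1 =>
        cases h2 with
        | inl h2 => exact Sum.LiftRel.inl (s.iseqv.trans h1 h2)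
      | inr h1 =>
        cases h2 with
        | inr h2 => exact Sum.LiftRel.inr (t.iseqv.trans h1 h2)

/-- Reindexing equivalence for the horizontal concatenation (tensor product). -/
def tensorEquiv (k l k' l' : ℕ) :
    (Fin (k + k') ⊕ Fin (l + l')) ≃ ((Fin k ⊕ Fin l) ⊕ (Fin k' ⊕ Fin l')) :=
  (Equiv.sumCongr finSumFinEquiv.symm finSumFinEquiv.symm).trans
    (Equiv.sumSumSumComm (Fin k) (Fin k') (Fin l) (Fin l'))

/-- Tensor product (horizontal concatenation) of partitions. -/
def tensorP {k l k' l' : ℕ} (p : PP k l) (q : PP k' l') : PP (k + k') (l + l') :=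
  Setoid.comap (tensorEquiv k l k' l') (sumSetoid p q)

/-- The relation on `k ⊔ l ⊔ m` points generated by `p` (upper part) and `q` (lower part). -/
def midRel {k l m : ℕ} (p : PP k l) (q : PP l m) :
    (Fin k ⊕ (Fin l ⊕ Fin m)) → (Fin k ⊕ (Fin l ⊕ Fin m)) → Prop := fun x y =>
  (∃ a b : Fin k ⊕ Fin l, p.r a b ∧ x = Sum.map id Sum.inl a ∧ y = Sum.map id Sum.inl b) ∨
  (∃ a b : Fin l ⊕ Fin m, q.r a b ∧ x = Sum.inr a ∧ y = Sum.inr b)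

/-- The equivalence relation generated on `k ⊔ l ⊔ m` in the composition procedure. -/
def bigS {k l m : ℕ} (p : PP k l) (q : PP l m) : Setoid (Fin k ⊕ (Fin l ⊕ Fin m)) :=
  Relation.EqvGen.setoid (midRel p q)

/-- `compP q p` is the vertical composition `qp` (apply `p : P(k,l)` first, then `q : P(l,m)`). -/
def compP {k l m : ℕ} (q : PP l m) (p : PP k l) : PP k m :=
  Setoid.comap (Sum.map id Sum.inr) (bigS p q)

/-- `rlP q p` : the number of closed loops removed in the composition `qp`,
i.e. the blocks of the generated relation consisting only of middle points. -/
noncomputable def rlP {k l m : ℕ} (q : PP l m) (p : PP k l) : ℕ :=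
  Nat.card {c : Quotient (bigS p q) //
    ∀ x, Quotient.mk (bigS p q) x = c → ∃ b : Fin l, x = Sum.inr (Sum.inl b)}

/-- `b(p)` : number of blocks. -/
noncomputable def bP {k l : ℕ} (p : PP k l) : ℕ := Nat.card (Quotient p)

/-- `t(p)` : number of through-blocks (blocks meeting both rows). -/
noncomputable def tP {k l : ℕ} (p : PP k l) : ℕ :=
  Nat.card {c : Quotient p // (∃ a : Fin k, Quotient.mk p (Sum.inl a) = c) ∧
    (∃ b : Fin l, Quotient.mk p (Sum.inr b) = c)}

/-- `β(p) = b(p) - t(p)` : number of non-through-blocks. -/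
noncomputable def betaP {k l : ℕ} (p : PP k l) : ℕ := bP p - tP p

/-- The identity partition `|^{⊗k}`. -/
def idP (k : ℕ) : PP k k := Setoid.ker (Sum.elim (fun i : Fin k => i) (fun i : Fin k => i))

/-- A pair partition: all blocks have size two. -/
def isPair {k l : ℕ} (p : PP k l) : Prop := ∀ x, Nat.card {y // p.r x y} = 2

/-- A through-partition: a pair partition each of whose blocks connects exactly one
upper point to exactly one lower point. -/
def isThrough {k : ℕ} (p : PP k k) : Prop :=
  isPair p ∧ (∀ a b : Fin k, p.r (Sum.inl a) (Sum.inl b) → a = b) ∧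
    (∀ a b : Fin k, p.r (Sum.inr a) (Sum.inr b) → a = b)

/-- A building partition. -/
def isBuilding {k l : ℕ} (p : PP k l) : Prop :=
  (∀ b b' : Fin l, p.r (Sum.inr b) (Sum.inr b') → b = b') ∧
  (∀ b : Fin l, ∃ a : Fin k, p.r (Sum.inl a) (Sum.inr b)) ∧
  (∀ b b' : Fin l, ∀ a a' : Fin k, b < b' →
    IsLeast {x : Fin k | p.r (Sum.inl x) (Sum.inr b)} a →
    IsLeast {x : Fin k | p.r (Sum.inl x) (Sum.inr b')} a' → a < a')

/-- A projective partition: symmetric and idempotent. -/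
def isProjective {k : ℕ} (p : PP k k) : Prop := swapP p = p ∧ compP p p = p

/-- Linear position of the points, reading the upper row left to right and then the
lower row right to left. -/
def posP (k l : ℕ) : Fin k ⊕ Fin l → ℕ :=
  Sum.elim (fun i => (i : ℕ)) (fun j => k + (l - 1 - (j : ℕ)))

/-- Noncrossing partitions. -/
def isNC {k l : ℕ} (p : PP k l) : Prop :=
  ¬ ∃ x1 x2 x3 x4 : Fin k ⊕ Fin l,
    posP k l x1 < posP k l x2 ∧ posP k l x2 < posP k l x3 ∧ posP k l x3 < posP k l x4 ∧
    p.r x1 x3 ∧ p.r x2 x4 ∧ ¬ p.r x1 x2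

/-- Membership in the category `⟨⊞⟩` corresponding to `H_N^+` : noncrossing partitions
in which every block has even size. -/
def isEvenNC {k l : ℕ} (p : PP k l) : Prop :=
  isNC p ∧ ∀ x, Even (Nat.card {y // p.r x y})

/-!
Write `p = u*u` and `q = v*v` with building partitions `u`, `v`. If `r*r = p` and `rr* = q`,
then `r` and `u` induce the same partition of the upper row of `p` and have the same
through-points, and likewise `r*` and `v` on `q`. Hence every block of `r` meeting both rows
links a through-block of `u` to one of `v`; since `r`, `p` and `q` are noncrossing, this linking
is an order isomorphism, hence the identity. The `i`-th through-block of `p` has twice the size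
of the upper part of the corresponding block of `r`, that of `q` twice its lower part, and that
block of `r` has even size, so `4` divides both sizes or neither.

Conversely `r := v*u` satisfies `r*r = p` and `rr* = q`. Its block through the `i`-th
through-blocks has size `|p-block|/2 + |q-block|/2`, which is even exactly when the two
letters of the words agree; its other blocks are blocks of `p` or `q`, and `r` is noncrossing
because `p` and `q` are.
-/

open Sum

section Composition

variable {k l m : ℕ}

theorem swapP_swapP (p : PP k l) : swapP (swapP p) = p := by
  ext x y
  cases x <;> cases y <;> rfl

theorem Setoid.ext_sum {α β : Type*} {P Q : Setoid (α ⊕ β)}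
    (hll : ∀ a a', P.r (inl a) (inl a') ↔ Q.r (inl a) (inl a'))
    (hlr : ∀ a b, P.r (inl a) (inr b) ↔ Q.r (inl a) (inr b))
    (hrr : ∀ b b', P.r (inr b) (inr b') ↔ Q.r (inr b) (inr b')) : P = Q := by
  apply Setoid.ext
  rintro (a | b) (a' | b')
  · exact hll a a'
  · exact hlr a b'
  · exact P.comm'.trans ((hlr a' b).trans Q.comm')
  · exact hrr b b'

def AgreeOnLower (s : PP k m) (t : PP l m) : Prop :=
  ∀ c c', s.r (inr c) (inr c') ↔ t.r (inr c) (inr c')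

/-- The blocks of the three-row diagram of `compP (swapP t) s` (upper row of `s`, the common
middle row, upper row of `t`), when `s` and `t` agree on the middle row. -/
def glueRel (s : PP k m) (t : PP l m) :
    (Fin k ⊕ (Fin m ⊕ Fin l)) → (Fin k ⊕ (Fin m ⊕ Fin l)) → Prop
  | .inl a, .inl a' => s.r (.inl a) (.inl a')
  | .inl a, .inr (.inl c) => s.r (.inl a) (.inr c)
  | .inl a, .inr (.inr b) => ∃ c, s.r (.inl a) (.inr c) ∧ t.r (.inl b) (.inr c)
  | .inr (.inl c), .inl a => s.r (.inl a) (.inr c)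
  | .inr (.inl c), .inr (.inl c') => s.r (.inr c) (.inr c')
  | .inr (.inl c), .inr (.inr b) => t.r (.inl b) (.inr c)
  | .inr (.inr b), .inl a => ∃ c, s.r (.inl a) (.inr c) ∧ t.r (.inl b) (.inr c)
  | .inr (.inr b), .inr (.inl c) => t.r (.inl b) (.inr c)
  | .inr (.inr b), .inr (.inr b') => t.r (.inl b) (.inl b')

theorem AgreeOnLower.refl (s : PP k m) : AgreeOnLower s s := fun _ _ => Iff.rfl

variable {s : PP k m} {t : PP l m}

theorem glueRel_refl (x) : glueRel s t x x := by
  rcases x with a | c | b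
  · exact s.iseqv.refl _
  · exact s.iseqv.refl _
  · exact t.iseqv.refl _

theorem glueRel_symm {x y} (h : glueRel s t x y) : glueRel s t y x := by
  have s_symm := @s.iseqv.symm; have t_symm := @t.iseqv.symm
  rcases x with a | c | b <;> rcases y with a' | c' | b' <;> simp only [glueRel] at h ⊢ <;> grind

theorem glueRel_trans (hE : AgreeOnLower s t) {x y z} (h1 : glueRel s t x y)
    (h2 : glueRel s t y z) : glueRel s t x z := by
  have s_trans := @s.iseqv.trans; have s_symm := @s.iseqv.symm
  have t_trans := @t.iseqv.trans; have t_symm := @t.iseqv.symm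
  rcases x with a | c | b <;> rcases y with a' | c' | b' <;> rcases z with a'' | c'' | b'' <;>
    simp only [glueRel, AgreeOnLower] at h1 h2 hE ⊢ <;> grind

theorem midRel_le_glueRel (hE : AgreeOnLower s t) {x y} (h : midRel s (swapP t) x y) :
    glueRel s t x y := by
  rcases h with ⟨a | c, a' | c', hab, rfl, rfl⟩ | ⟨c | b, c' | b', hab, rfl, rfl⟩
  · exact hab
  · exact hab
  · exact s.iseqv.symm hab
  · exact hab
  · exact (hE _ _).mpr hab
  · exact t.iseqv.symm hab
  · exact hab
  · exact hab

theorem bigS_swapP_iff (hE : AgreeOnLower s t) (x y) :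
    (bigS s (swapP t)).r x y ↔ glueRel s t x y := by
  constructor
  · intro h
    induction h with
    | rel x y h => exact midRel_le_glueRel hE h
    | refl x => exact glueRel_refl x
    | symm x y _ ih => exact glueRel_symm ih
    | trans x y z _ _ ih1 ih2 => exact glueRel_trans hE ih1 ih2
  · have upper (z z' : Fin k ⊕ Fin m) (hz : s.r z z') :
        (bigS s (swapP t)).r (Sum.map id inl z) (Sum.map id inl z') :=
      .rel _ _ (.inl ⟨z, z', hz, rfl, rfl⟩)
    have lower (z z' : Fin m ⊕ Fin l) (hz : (swapP t).r z z') :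
        (bigS s (swapP t)).r (inr z) (inr z') :=
      .rel _ _ (.inr ⟨z, z', hz, rfl, rfl⟩)
    intro h
    rcases x with a | c | b <;> rcases y with a' | c' | b'
    · exact upper (.inl a) (.inl a') h
    · exact upper (.inl a) (.inr c') h
    · obtain ⟨c, hc1, hc2⟩ := h
      exact .trans _ _ _ (upper (.inl a) (.inr c) hc1) (lower (.inl c) (.inr b') (t.iseqv.symm hc2))
    · exact .symm _ _ (upper (.inl a') (.inr c) h)
    · exact upper (.inr c) (.inr c') h
    · exact lower (.inl c) (.inr b') (t.iseqv.symm h)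
    · obtain ⟨c, hc1, hc2⟩ := h
      exact .symm _ _ (.trans _ _ _ (upper (.inl a') (.inr c) hc1)
        (lower (.inl c) (.inr b) (t.iseqv.symm hc2)))
    · exact .symm _ _ (lower (.inl c') (.inr b) (t.iseqv.symm h))
    · exact lower (.inr b) (.inr b') h

theorem compP_swapP_inl_inl (hE : AgreeOnLower s t) (a a' : Fin k) :
    (compP (swapP t) s).r (inl a) (inl a') ↔ s.r (inl a) (inl a') :=
  bigS_swapP_iff hE (inl a) (inl a')

theorem compP_swapP_inl_inr (hE : AgreeOnLower s t) (a : Fin k) (b : Fin l) :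
    (compP (swapP t) s).r (inl a) (inr b) ↔ ∃ c, s.r (inl a) (inr c) ∧ t.r (inl b) (inr c) :=
  bigS_swapP_iff hE (inl a) (inr (inr b))

theorem compP_swapP_inr_inr (hE : AgreeOnLower s t) (b b' : Fin l) :
    (compP (swapP t) s).r (inr b) (inr b') ↔ t.r (inl b) (inl b') :=
  bigS_swapP_iff hE (inr (inr b)) (inr (inr b'))

theorem swapP_compP_swapP (hE : AgreeOnLower s t) :
    swapP (compP (swapP t) s) = compP (swapP s) t := by
  have hE' : AgreeOnLower t s := fun c c' => (hE c c').symm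
  apply Setoid.ext_sum
  · intro b b'
    exact (compP_swapP_inr_inr hE b b').trans (compP_swapP_inl_inl hE' b b').symm
  · intro b a
    refine (Setoid.comm' _).trans ((compP_swapP_inl_inr hE a b).trans ?_)
    simpa only [and_comm] using (compP_swapP_inl_inr hE' b a).symm
  · intro a a'
    exact (compP_swapP_inl_inl hE a a').trans (compP_swapP_inr_inr hE' a a').symm

end Composition

section Counting

theorem Setoid.card_rel_comm {α : Type*} (P : Setoid α) (x : α) :
    Nat.card {y // P.r y x} = Nat.card {y // P.r x y} :=
  Nat.card_congr (Equiv.subtypeEquivRight fun _ => P.comm')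

theorem Setoid.card_rel_congr {α β : Type*} (P : Setoid α) (f : β → α) {x x' : α}
    (h : P.r x x') : Nat.card {y // P.r (f y) x} = Nat.card {y // P.r (f y) x'} :=
  Nat.card_congr (Equiv.subtypeEquivRight fun _ =>
    ⟨fun hy => P.iseqv.trans hy h, fun hy => P.iseqv.trans hy (P.iseqv.symm h)⟩)

theorem Setoid.card_rel_sum {α β : Type*} [Finite α] [Finite β] (P : Setoid (α ⊕ β))
    (x : α ⊕ β) :
    Nat.card {y // P.r y x} = Nat.card {a // P.r (inl a) x} + Nat.card {b // P.r (inr b) x} := by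
  rw [Nat.card_congr Equiv.subtypeSum, Nat.card_sum]

theorem Setoid.card_rel_eq_of_not_rel_inr {α β : Type*} [Finite α] [Finite β]
    (P : Setoid (α ⊕ β)) {x : α ⊕ β} (h : ∀ b, ¬ P.r (inr b) x) :
    Nat.card {y // P.r y x} = Nat.card {a // P.r (inl a) x} := by
  have : IsEmpty {b // P.r (inr b) x} := ⟨fun ⟨b, hb⟩ => h b hb⟩
  rw [P.card_rel_sum, Nat.card_of_isEmpty (α := {b // P.r (inr b) x}), add_zero]

variable {k l m : ℕ}

theorem card_rel_swapP (P : PP k l) (b : Fin l) :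
    Nat.card {y // (swapP P).r y (inl b)} = Nat.card {y // P.r y (inr b)} :=
  Nat.card_congr (Equiv.subtypeEquiv (Equiv.sumComm _ _) fun _ => Iff.rfl)

theorem compP_swapP_self_inl_inr_self (u : PP k m) (a : Fin k) :
    (compP (swapP u) u).r (inl a) (inr a) ↔ ∃ c, u.r (inl a) (inr c) := by
  simp only [compP_swapP_inl_inr (.refl u), and_self]

theorem card_compP_swapP_self (u : PP k m) {a : Fin k} {c : Fin m} (hac : u.r (inl a) (inr c)) :
    Nat.card {y // (compP (swapP u) u).r y (inl a)} =
      2 * Nat.card {x : Fin k // u.r (inl x) (inr c)} := by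
  have hE := AgreeOnLower.refl u
  have upper : Nat.card {x // (compP (swapP u) u).r (inl x) (inl a)} =
      Nat.card {x : Fin k // u.r (inl x) (inr c)} := by
    refine .trans ?_ (u.card_rel_congr inl hac)
    exact Nat.card_congr (Equiv.subtypeEquivRight fun x => compP_swapP_inl_inl hE x a)
  have lower : Nat.card {x // (compP (swapP u) u).r (inr x) (inl a)} =
      Nat.card {x : Fin k // u.r (inl x) (inr c)} := by
    refine Nat.card_congr (Equiv.subtypeEquivRight fun x => ?_)
    rw [Setoid.comm', compP_swapP_inl_inr hE]
    constructor
    · rintro ⟨c', hac', hxc'⟩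
      exact u.iseqv.trans hxc' (u.iseqv.trans (u.iseqv.symm hac') hac)
    · exact fun hxc => ⟨c, hac, hxc⟩
  rw [Setoid.card_rel_sum, upper, lower, two_mul]

theorem four_dvd_two_mul_iff_iff_even_add (x y : ℕ) :
    (4 ∣ 2 * x ↔ 4 ∣ 2 * y) ↔ Even (x + y) := by
  rw [Nat.even_add]
  simp only [Nat.even_iff]
  omega

end Counting

section Order

theorem Setoid.rel_iff_rel_of_rel {α : Type*} (P : Setoid α) {x x' y y' : α} (hx : P.r x y)
    (hx' : P.r x' y') : P.r x x' ↔ P.r y y' :=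
  ⟨fun h => P.iseqv.trans (P.iseqv.symm hx) (P.iseqv.trans h hx'),
    fun h => P.iseqv.trans hx (P.iseqv.trans h (P.iseqv.symm hx'))⟩

theorem Fin.val_le_of_rel {n m : ℕ} {R : Fin n → Fin m → Prop} (total : ∀ i, ∃ j, R i j)
    (mono : ∀ ⦃i j i' j'⦄, R i j → R i' j' → i < i' → j < j') {i : Fin n} {j : Fin m}
    (h : R i j) : (i : ℕ) ≤ j := by
  obtain ⟨t, ht⟩ : ∃ t, (i : ℕ) = t := ⟨_, rfl⟩
  induction t generalizing i j with
  | zero => omega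
  | succ t ih =>
    obtain ⟨j', h'⟩ := total ⟨t, by omega⟩
    have : t ≤ j' := ih h' rfl
    have := mono h' h (Fin.mk_lt_of_lt_val (by omega))
    omega

theorem Fin.eq_and_val_eq_of_lt_iff {n m : ℕ} {R : Fin n → Fin m → Prop}
    (total : ∀ i, ∃ j, R i j) (cototal : ∀ j, ∃ i, R i j)
    (mono : ∀ ⦃i j i' j'⦄, R i j → R i' j' → (i < i' ↔ j < j')) :
    n = m ∧ ∀ ⦃i j⦄, R i j → (i : ℕ) = j := by
  have le {i j} (h : R i j) : (i : ℕ) ≤ j :=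
    Fin.val_le_of_rel total (fun _ _ _ _ h h' => (mono h h').mp) h
  have ge {i j} (h : R i j) : (j : ℕ) ≤ i :=
    Fin.val_le_of_rel (R := flip R) cototal (fun _ _ _ _ h h' => (mono h h').mpr) h
  refine ⟨le_antisymm ?_ ?_, fun i j h => le_antisymm (le h) (ge h)⟩
  · rcases n with _ | n
    · exact Nat.zero_le _
    obtain ⟨j, h⟩ := total (Fin.last n)
    have := le h
    rw [Fin.val_last] at this
    omega
  · rcases m with _ | m
    · exact Nat.zero_le _
    obtain ⟨i, h⟩ := cototal (Fin.last m)
    have := ge h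
    rw [Fin.val_last] at this
    omega

variable {k l n : ℕ}

theorem posP_inl (a : Fin k) : posP k l (inl a) = a := rfl

theorem posP_inr (b : Fin l) : posP k l (inr b) = k + (l - 1 - b) := rfl

theorem isNC.rel_of_cross {P : PP k l} (hP : isNC P) {x₁ x₂ x₃ x₄ : Fin k ⊕ Fin l}
    (h₁₂ : posP k l x₁ < posP k l x₂) (h₂₃ : posP k l x₂ < posP k l x₃)
    (h₃₄ : posP k l x₃ < posP k l x₄) (h₁₃ : P.r x₁ x₃) (h₂₄ : P.r x₂ x₄) : P.r x₁ x₂ :=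
  Classical.not_not.mp fun h => hP ⟨x₁, x₂, x₃, x₄, h₁₂, h₂₃, h₃₄, h₁₃, h₂₄, h⟩

theorem isNC.le_of_lt {r : PP k l} (hr : isNC r) {a a' : Fin k} {b b' : Fin l}
    (hab : r.r (inl a) (inr b)) (hab' : r.r (inl a') (inr b')) (hn : ¬ r.r (inl a) (inl a'))
    (h : a < a') : b ≤ b' := by
  by_contra! hb
  refine hn (hr.rel_of_cross (x₃ := inr b) (x₄ := inr b') ?_ ?_ ?_ hab hab')
  all_goals simp only [posP_inl, posP_inr]; omega

theorem isNC.lt_and_not_rel_iff {r : PP k l} (hr : isNC r) {a a' : Fin k} {b b' : Fin l}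
    (hab : r.r (inl a) (inr b)) (hab' : r.r (inl a') (inr b')) :
    a < a' ∧ ¬ r.r (inl a) (inl a') ↔ b < b' ∧ ¬ r.r (inr b) (inr b') := by
  rw [← r.rel_iff_rel_of_rel hab hab']
  refine and_congr_left fun hn => ⟨fun h => ?_, fun h => ?_⟩
  · refine (hr.le_of_lt hab hab' hn h).lt_of_ne ?_
    rintro rfl
    exact hn (r.iseqv.trans hab (r.iseqv.symm hab'))
  · rcases lt_trichotomy a a' with h' | rfl | h'
    · exact h'
    · exact absurd (r.iseqv.refl _) hn
    · exact absurd h (hr.le_of_lt hab' hab (fun h'' => hn (r.iseqv.symm h'')) h').not_gt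

theorem isBuilding.rel_inr_iff {u : PP k n} (hu : isBuilding u) {i j : Fin n} :
    u.r (inr i) (inr j) ↔ i = j :=
  ⟨hu.1 i j, fun h => h ▸ u.iseqv.refl _⟩

theorem isBuilding.lt_of_lt {u : PP k n} (hu : isBuilding u) (hnc : isNC (compP (swapP u) u))
    {i j : Fin n} {a a' : Fin k} (ha : u.r (inl a) (inr i)) (ha' : u.r (inl a') (inr j))
    (hij : i < j) : a < a' := by
  have hE := AgreeOnLower.refl u
  obtain ⟨a₀, ha₀⟩ := (Set.toFinite {x | u.r (inl x) (inr i)}).isCompact.exists_isLeast ⟨a, ha⟩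
  obtain ⟨a₀', ha₀'⟩ :=
    (Set.toFinite {x | u.r (inl x) (inr j)}).isCompact.exists_isLeast ⟨a', ha'⟩
  have hlt : a₀ < a₀' := hu.2.2 i j a₀ a₀' hij ha₀ ha₀'
  have hne : a₀' ≠ a := by
    rintro rfl
    exact hij.ne (hu.1 _ _ (u.iseqv.trans (u.iseqv.symm ha) ha₀'.1))
  by_contra! h
  have hlt' : a₀' < a := lt_of_le_of_ne ((ha₀'.2 ha').trans h) hne
  -- the least point of block `j` would separate the two points `a₀ < a` of block `i`
  have hcross : (compP (swapP u) u).r (inl a₀) (inl a₀') := by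
    refine hnc.rel_of_cross (x₃ := inl a) (x₄ := inr a₀') hlt hlt' ?_ ?_ ?_
    · simp only [posP_inl, posP_inr]; omega
    · exact (compP_swapP_inl_inl hE _ _).mpr (u.iseqv.trans ha₀.1 (u.iseqv.symm ha))
    · exact (compP_swapP_self_inl_inr_self u a₀').mpr ⟨j, ha₀'.1⟩
  rw [compP_swapP_inl_inl hE, u.rel_iff_rel_of_rel ha₀.1 ha₀'.1, hu.rel_inr_iff] at hcross
  exact hij.ne hcross

theorem isBuilding.lt_iff {u : PP k n} (hu : isBuilding u) (hnc : isNC (compP (swapP u) u))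
    {i j : Fin n} {a a' : Fin k} (ha : u.r (inl a) (inr i)) (ha' : u.r (inl a') (inr j)) :
    i < j ↔ a < a' ∧ ¬ u.r (inl a) (inl a') := by
  rw [u.rel_iff_rel_of_rel ha ha', hu.rel_inr_iff]
  exact ⟨fun h => ⟨hu.lt_of_lt hnc ha ha' h, h.ne⟩, fun ⟨h, hne⟩ =>
    (lt_or_gt_of_ne hne).resolve_right fun h' => lt_asymm h (hu.lt_of_lt hnc ha' ha h')⟩

end Order

section Forward

variable {k l n m : ℕ}

theorem rel_inl_iff_of_compP_swapP_eq {s : PP k n} {t : PP k m}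
    (h : compP (swapP s) s = compP (swapP t) t) {a a' : Fin k} :
    s.r (inl a) (inl a') ↔ t.r (inl a) (inl a') := by
  rw [← compP_swapP_inl_inl (.refl s), h, compP_swapP_inl_inl (.refl t)]

theorem exists_rel_inr_iff_of_compP_swapP_eq {s : PP k n} {t : PP k m}
    (h : compP (swapP s) s = compP (swapP t) t) {a : Fin k} :
    (∃ c, s.r (inl a) (inr c)) ↔ ∃ c, t.r (inl a) (inr c) := by
  rw [← compP_swapP_self_inl_inr_self, h, compP_swapP_self_inl_inr_self]

def throughLink (u : PP k n) (v : PP l m) (r : PP k l) (i : Fin n) (j : Fin m) : Prop :=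
  ∃ a b, u.r (inl a) (inr i) ∧ v.r (inl b) (inr j) ∧ r.r (inl a) (inr b)

variable {u : PP k n} {v : PP l m} {r : PP k l}

theorem throughLink_swapP {i : Fin n} {j : Fin m} :
    throughLink v u (swapP r) j i ↔ throughLink u v r i j :=
  ⟨fun ⟨b, a, hb, ha, hba⟩ => ⟨a, b, ha, hb, r.iseqv.symm hba⟩,
    fun ⟨a, b, ha, hb, hab⟩ => ⟨b, a, hb, ha, r.iseqv.symm hab⟩⟩

theorem exists_throughLink (hru : compP (swapP r) r = compP (swapP u) u)
    (hrv : compP (swapP (swapP r)) (swapP r) = compP (swapP v) v)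
    (hu : isBuilding u) (i : Fin n) : ∃ j, throughLink u v r i j := by
  obtain ⟨a, ha⟩ := hu.2.1 i
  obtain ⟨b, hab⟩ := (exists_rel_inr_iff_of_compP_swapP_eq hru).mpr ⟨i, ha⟩
  obtain ⟨j, hbj⟩ := (exists_rel_inr_iff_of_compP_swapP_eq hrv).mp ⟨a, r.iseqv.symm hab⟩
  exact ⟨j, a, b, ha, hbj, hab⟩

theorem throughLink.rel (hru : compP (swapP r) r = compP (swapP u) u)
    (hrv : compP (swapP (swapP r)) (swapP r) = compP (swapP v) v)
    {i : Fin n} {j : Fin m} (hL : throughLink u v r i j) {a : Fin k}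
    {b : Fin l} (ha : u.r (inl a) (inr i)) (hb : v.r (inl b) (inr j)) : r.r (inl a) (inr b) := by
  obtain ⟨a₀, b₀, ha₀, hb₀, hab₀⟩ := hL
  have haa₀ : r.r (inl a) (inl a₀) :=
    (rel_inl_iff_of_compP_swapP_eq hru).mpr (u.iseqv.trans ha (u.iseqv.symm ha₀))
  have hbb₀ : (swapP r).r (inl b) (inl b₀) :=
    (rel_inl_iff_of_compP_swapP_eq hrv).mpr (v.iseqv.trans hb (v.iseqv.symm hb₀))
  exact r.iseqv.trans haa₀ (r.iseqv.trans hab₀ (r.iseqv.symm hbb₀))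

theorem throughLink_lt_iff (hru : compP (swapP r) r = compP (swapP u) u)
    (hrv : compP (swapP (swapP r)) (swapP r) = compP (swapP v) v)
    (hu : isBuilding u) (hv : isBuilding v)
    (hpnc : isNC (compP (swapP u) u)) (hqnc : isNC (compP (swapP v) v)) (hr : isNC r)
    {i i' : Fin n} {j j' : Fin m} (hL : throughLink u v r i j) (hL' : throughLink u v r i' j') :
    i < i' ↔ j < j' := by
  obtain ⟨a, b, ha, hb, hab⟩ := hL
  obtain ⟨a', b', ha', hb', hab'⟩ := hL'
  calc i < i' ↔ a < a' ∧ ¬ u.r (inl a) (inl a') := hu.lt_iff hpnc ha ha'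
    _ ↔ a < a' ∧ ¬ r.r (inl a) (inl a') := by rw [rel_inl_iff_of_compP_swapP_eq hru]
    _ ↔ b < b' ∧ ¬ r.r (inr b) (inr b') := hr.lt_and_not_rel_iff hab hab'
    _ ↔ b < b' ∧ ¬ v.r (inl b) (inl b') :=
      and_congr_right' (rel_inl_iff_of_compP_swapP_eq hrv).not
    _ ↔ j < j' := (hv.lt_iff hqnc hb hb').symm

theorem word_eq_of_equiv {p : PP k k} {q : PP l l} (hpc : isNC p) (hqc : isNC q)
    (hu : isBuilding u) (hpdec : p = compP (swapP u) u)
    (hv : isBuilding v) (hqdec : q = compP (swapP v) v)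
    (hr : isEvenNC r) (h1 : compP (swapP r) r = p) (h2 : compP r (swapP r) = q) :
    ∃ h : n = m, ∀ (i : Fin n) (a : Fin k) (b : Fin l),
      u.r (inl a) (inr i) → v.r (inl b) (inr (Fin.cast h i)) →
      (4 ∣ Nat.card {y // p.r y (inl a)} ↔ 4 ∣ Nat.card {y // q.r y (inl b)}) := by
  have h2' : compP (swapP (swapP r)) (swapP r) = q := by rwa [swapP_swapP]
  have hru := h1.trans hpdec
  have hrv := h2'.trans hqdec
  have hrv' : compP (swapP (swapP (swapP r))) (swapP (swapP r)) = compP (swapP u) u := by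
    simpa only [swapP_swapP] using hru
  obtain ⟨hnm, hval⟩ := Fin.eq_and_val_eq_of_lt_iff (R := throughLink u v r)
    (exists_throughLink hru hrv hu)
    (fun j => (exists_throughLink hrv hrv' hv j).imp fun _ => throughLink_swapP.mp)
    (fun _ _ _ _ => throughLink_lt_iff hru hrv hu hv (hpdec ▸ hpc) (hqdec ▸ hqc) hr.1)
  refine ⟨hnm, fun i a b ha hb => ?_⟩
  obtain ⟨j, hij⟩ := exists_throughLink hru hrv hu i
  obtain rfl : j = Fin.cast hnm i := Fin.ext (hval hij).symm
  have hab := hij.rel hru hrv ha hb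
  rw [← h1, ← h2', card_compP_swapP_self r hab, card_compP_swapP_self (swapP r) (r.iseqv.symm hab),
    four_dvd_two_mul_iff_iff_even_add, ← Setoid.card_rel_congr r inl hab]
  have hblock := hr.2 (inl a)
  rwa [← Setoid.card_rel_comm, Setoid.card_rel_sum] at hblock

end Forward

section Backward

variable {k l n : ℕ} {u : PP k n} {v : PP l n}

theorem agreeOnLower_of_isBuilding (hu : isBuilding u) (hv : isBuilding v) : AgreeOnLower u v :=
  fun _ _ => hu.rel_inr_iff.trans hv.rel_inr_iff.symm

theorem compP_swapP_compP_swapP (hu : isBuilding u) (hv : isBuilding v) :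
    compP (swapP (compP (swapP v) u)) (compP (swapP v) u) = compP (swapP u) u := by
  have hE := agreeOnLower_of_isBuilding hu hv
  have hR := AgreeOnLower.refl (compP (swapP v) u)
  have hU := AgreeOnLower.refl u
  apply Setoid.ext_sum
  · intro a a'
    rw [compP_swapP_inl_inl hR, compP_swapP_inl_inl hE, compP_swapP_inl_inl hU]
  · intro a a'
    simp only [compP_swapP_inl_inr hR, compP_swapP_inl_inr hU, compP_swapP_inl_inr hE]
    constructor
    · rintro ⟨b, ⟨c, hac, hbc⟩, ⟨c', ha'c', hbc'⟩⟩
      obtain rfl : c = c' := hv.rel_inr_iff.mp (v.iseqv.trans (v.iseqv.symm hbc) hbc')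
      exact ⟨c, hac, ha'c'⟩
    · rintro ⟨c, hac, ha'c⟩
      obtain ⟨b, hbc⟩ := hv.2.1 c
      exact ⟨b, ⟨c, hac, hbc⟩, ⟨c, ha'c, hbc⟩⟩
  · intro a a'
    rw [compP_swapP_inr_inr hR, compP_swapP_inl_inl hE, compP_swapP_inr_inr hU]

theorem even_card_compP_swapP_inl (hu : isBuilding u) (hv : isBuilding v)
    (hpe : ∀ x, Even (Nat.card {y // (compP (swapP u) u).r x y}))
    (hw : ∀ (i : Fin n) (a : Fin k) (b : Fin l), u.r (inl a) (inr i) → v.r (inl b) (inr i) →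
      (4 ∣ Nat.card {y // (compP (swapP u) u).r y (inl a)} ↔
        4 ∣ Nat.card {y // (compP (swapP v) v).r y (inl b)}))
    (a : Fin k) : Even (Nat.card {y // (compP (swapP v) u).r y (inl a)}) := by
  have hE := agreeOnLower_of_isBuilding hu hv
  have hU := AgreeOnLower.refl u
  by_cases hthrough : ∃ i, u.r (inl a) (inr i)
  · obtain ⟨i, ha⟩ := hthrough
    obtain ⟨b, hb⟩ := hv.2.1 i
    have upper : Nat.card {x // (compP (swapP v) u).r (inl x) (inl a)} =
        Nat.card {x // u.r (inl x) (inr i)} :=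
      (Nat.card_congr (Equiv.subtypeEquivRight fun x => compP_swapP_inl_inl hE x a)).trans
        (u.card_rel_congr inl ha)
    have lower : Nat.card {y // (compP (swapP v) u).r (inr y) (inl a)} =
        Nat.card {y // v.r (inl y) (inr i)} := by
      refine Nat.card_congr (Equiv.subtypeEquivRight fun y => ?_)
      rw [Setoid.comm', compP_swapP_inl_inr hE]
      constructor
      · rintro ⟨c, hac, hyc⟩
        obtain rfl : c = i := hu.rel_inr_iff.mp (u.iseqv.trans (u.iseqv.symm hac) ha)
        exact hyc
      · exact fun hyi => ⟨i, ha, hyi⟩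
    rw [Setoid.card_rel_sum, upper, lower, ← four_dvd_two_mul_iff_iff_even_add,
      ← card_compP_swapP_self u ha, ← card_compP_swapP_self v hb]
    exact hw i a b ha hb
  · simp only [not_exists] at hthrough
    have hr₀ (y : Fin l) : ¬ (compP (swapP v) u).r (inr y) (inl a) := fun hy =>
      let ⟨c, hac, _⟩ := (compP_swapP_inl_inr hE a y).mp (Setoid.symm' _ hy); hthrough c hac
    have hp₀ (y : Fin k) : ¬ (compP (swapP u) u).r (inr y) (inl a) := fun hy =>
      let ⟨c, hac, _⟩ := (compP_swapP_inl_inr hU a y).mp (Setoid.symm' _ hy); hthrough c hac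
    rw [Setoid.card_rel_eq_of_not_rel_inr _ hr₀, Nat.card_congr (Equiv.subtypeEquivRight fun x =>
      (compP_swapP_inl_inl hE x a).trans (compP_swapP_inl_inl hU x a).symm),
      ← Setoid.card_rel_eq_of_not_rel_inr _ hp₀, Setoid.card_rel_comm]
    exact hpe (inl a)

theorem isNC_compP_swapP (hu : isBuilding u) (hv : isBuilding v)
    (hpnc : isNC (compP (swapP u) u)) (hqnc : isNC (compP (swapP v) v)) :
    isNC (compP (swapP v) u) := by
  have hE := agreeOnLower_of_isBuilding hu hv
  set r := compP (swapP v) u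
  have upper (a a' : Fin k) : r.r (inl a) (inl a') ↔ (compP (swapP u) u).r (inl a) (inl a') :=
    (compP_swapP_inl_inl hE a a').trans (compP_swapP_inl_inl (.refl u) a a').symm
  have lower (b b' : Fin l) : r.r (inr b) (inr b') ↔ (compP (swapP v) v).r (inl b) (inl b') :=
    (compP_swapP_inr_inr hE b b').trans (compP_swapP_inl_inl (.refl v) b b').symm
  rintro ⟨x₁, x₂, x₃, x₄, h₁₂, h₂₃, h₃₄, h₁₃, h₂₄, hn⟩
  rcases x₁ with a₁ | b₁ <;> rcases x₂ with a₂ | b₂ <;> rcases x₃ with a₃ | b₃ <;>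
    rcases x₄ with a₄ | b₄ <;> simp only [posP_inl, posP_inr] at h₁₂ h₂₃ h₃₄ <;> try omega
  · exact hn ((upper _ _).mpr (hpnc.rel_of_cross (x₃ := inl a₃) (x₄ := inl a₄) h₁₂ h₂₃ h₃₄
      ((upper _ _).mp h₁₃) ((upper _ _).mp h₂₄)))
  · obtain ⟨c, hc, -⟩ := (compP_swapP_inl_inr hE _ _).mp h₂₄
    refine hn ((upper _ _).mpr (hpnc.rel_of_cross (x₃ := inl a₃) (x₄ := inr a₂) h₁₂ h₂₃ ?_
      ((upper _ _).mp h₁₃) ((compP_swapP_self_inl_inr_self u a₂).mpr ⟨c, hc⟩)))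
    simp only [posP_inl, posP_inr]; omega
  · obtain ⟨c₁, hc₁, hb₃⟩ := (compP_swapP_inl_inr hE _ _).mp h₁₃
    obtain ⟨c₂, hc₂, hb₄⟩ := (compP_swapP_inl_inr hE _ _).mp h₂₄
    have hc : c₁ < c₂ :=
      (hu.lt_iff hpnc hc₁ hc₂).mpr ⟨h₁₂, fun h => hn ((compP_swapP_inl_inl hE _ _).mpr h)⟩
    have := ((hv.lt_iff hqnc hb₃ hb₄).mp hc).1
    omega
  · obtain ⟨c, -, hc⟩ := (compP_swapP_inl_inr hE _ _).mp h₁₃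
    have h₄₃ : (compP (swapP v) v).r (inl b₄) (inl b₃) := by
      refine hqnc.rel_of_cross (x₃ := inl b₂) (x₄ := inr b₃) ?_ ?_ ?_
        ((lower _ _).mp (r.iseqv.symm h₂₄)) ((compP_swapP_self_inl_inr_self v b₃).mpr ⟨c, hc⟩)
      all_goals simp only [posP_inl, posP_inr]; omega
    exact hn (r.iseqv.trans h₁₃
      (r.iseqv.trans (r.iseqv.symm ((lower _ _).mpr h₄₃)) (r.iseqv.symm h₂₄)))
  · have h₄₃ : (compP (swapP v) v).r (inl b₄) (inl b₃) := by
      refine hqnc.rel_of_cross (x₃ := inl b₂) (x₄ := inl b₁) ?_ ?_ ?_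
        ((lower _ _).mp (r.iseqv.symm h₂₄)) ((lower _ _).mp (r.iseqv.symm h₁₃))
      all_goals simp only [posP_inl]; omega
    exact hn (r.iseqv.trans h₁₃
      (r.iseqv.trans (r.iseqv.symm ((lower _ _).mpr h₄₃)) (r.iseqv.symm h₂₄)))

end Backward

theorem equiv_of_word_eq {k l n m : ℕ} {p : PP k k} {q : PP l l} (hpc : isEvenNC p)
    (hqc : isEvenNC q) {u : PP k n} (hu : isBuilding u) (hpdec : p = compP (swapP u) u)
    {v : PP l m} (hv : isBuilding v) (hqdec : q = compP (swapP v) v) (h : n = m)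
    (hw : ∀ (i : Fin n) (a : Fin k) (b : Fin l),
      u.r (inl a) (inr i) → v.r (inl b) (inr (Fin.cast h i)) →
      (4 ∣ Nat.card {y // p.r y (inl a)} ↔ 4 ∣ Nat.card {y // q.r y (inl b)})) :
    ∃ r : PP k l, isEvenNC r ∧ compP (swapP r) r = p ∧ compP r (swapP r) = q := by
  subst h hpdec hqdec
  simp only [Fin.cast_eq_self] at hw
  have hswap : swapP (compP (swapP v) u) = compP (swapP u) v :=
    swapP_compP_swapP (agreeOnLower_of_isBuilding hu hv)
  refine ⟨compP (swapP v) u, ⟨isNC_compP_swapP hu hv hpc.1 hqc.1, ?_⟩,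
    compP_swapP_compP_swapP hu hv, ?_⟩
  · rintro (a | b)
    · rw [← Setoid.card_rel_comm]
      exact even_card_compP_swapP_inl hu hv hpc.2 hw a
    · rw [← Setoid.card_rel_comm, ← card_rel_swapP, hswap]
      exact even_card_compP_swapP_inl hv hu hqc.2 (fun i b a hb ha => (hw i a b ha hb).symm) b
  · calc compP (compP (swapP v) u) (swapP (compP (swapP v) u))
        = compP (swapP (swapP (compP (swapP v) u))) (swapP (compP (swapP v) u)) := by
          rw [swapP_swapP]
      _ = compP (swapP v) v := by rw [hswap]; exact compP_swapP_compP_swapP hv hu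

theorem evenNC_equivalence_iff_word_general {k l : ℕ} (p : PP k k) (q : PP l l)
    (hpc : isEvenNC p) (hqc : isEvenNC q)
    (pu : PP k (tP p)) (hpu : isBuilding pu) (hpdec : p = compP (swapP pu) pu)
    (qu : PP l (tP q)) (hqu : isBuilding qu) (hqdec : q = compP (swapP qu) qu) :
    (∃ r : PP k l, isEvenNC r ∧ compP (swapP r) r = p ∧ compP r (swapP r) = q) ↔
      ∃ h : tP p = tP q, ∀ (i : Fin (tP p)) (a : Fin k) (b : Fin l),
        pu.r (Sum.inl a) (Sum.inr i) → qu.r (Sum.inl b) (Sum.inr (Fin.cast h i)) →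
        (4 ∣ Nat.card {y // p.r y (Sum.inl a)} ↔ 4 ∣ Nat.card {y // q.r y (Sum.inl b)}) :=
  ⟨fun ⟨_, hr, h1, h2⟩ => word_eq_of_equiv hpc.1 hqc.1 hpu hpdec hqu hqdec hr h1 h2,
    fun ⟨h, hw⟩ => equiv_of_word_eq hpc hqc hpu hpdec hqu hqdec h hw⟩

/-- in the category `⟨⊞⟩` of noncrossing partitions with blocks of even
size, two projective partitions are equivalent iff they have the same word `w(p)` over
`ℤ/2`, i.e. the same number of through-blocks and, for each `i`, the `i`-th through-block
(read left to right, as recorded by the building partition of the through-block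
decomposition) of `p` has size divisible by 4 exactly when that of `q` does. -/
theorem evenNC_equivalence_iff_word {k l : ℕ} (p : PP k k) (q : PP l l)
    (hp : isProjective p) (hq : isProjective q) (hpc : isEvenNC p) (hqc : isEvenNC q)
    (pu : PP k (tP p)) (hpu : isBuilding pu) (hpdec : p = compP (swapP pu) pu)
    (qu : PP l (tP q)) (hqu : isBuilding qu) (hqdec : q = compP (swapP qu) qu) :
    (∃ r : PP k l, isEvenNC r ∧ compP (swapP r) r = p ∧ compP r (swapP r) = q) ↔
      ∃ h : tP p = tP q, ∀ (i : Fin (tP p)) (a : Fin k) (b : Fin l),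
        pu.r (Sum.inl a) (Sum.inr i) → qu.r (Sum.inl b) (Sum.inr (Fin.cast h i)) →
        (4 ∣ Nat.card {y // p.r y (Sum.inl a)} ↔ 4 ∣ Nat.card {y // q.r y (Sum.inl b)}) :=
  evenNC_equivalence_iff_word_general p q hpc hqc pu hpu hpdec qu hqu hqdec
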